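/- arXiv:0712.3130 — 5 statements merged into one kernel-verified Lean document; each statement's English description precedes it below -/
import Mathlib

section
/- Let A = (V, μ, α) be a commutative Hom-associative algebra and φ a skew-symmetric bilinear map V × V → V with δ²φ = 0, where δ²φ(x,y,z) = φ(α(x), μ(y,z)) − φ(μ(x,y), α(z)) + μ(α(x), φ(y,z)) − μ(φ(x,y), α(z)). Then for all x, y, z ∈ V: φ(α(x), μ(y,z)) = μ(α(y), φ(x,z)) + μ(α(z), φ(x,y)). -/
/-- A skew-symmetric 2-cocycle of a commutative Hom-associative algebra satisfies
the Hom-Poisson compatibility condition. -/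
theorem skew_cocycle_compatibility
    {K V : Type*} [Field K] [CharZero K] [AddCommGroup V] [Module K V]
    (μ : V →ₗ[K] V →ₗ[K] V) (α : V →ₗ[K] V) (φ : V →ₗ[K] V →ₗ[K] V)
    (hcomm : ∀ x y : V, μ x y = μ y x)
    (hassoc : ∀ x y z : V, μ (α x) (μ y z) = μ (μ x y) (α z))
    (hskew : ∀ x y : V, φ x y = - φ y x)
    (hcocycle : ∀ x y z : V,
      φ (α x) (μ y z) - φ (μ x y) (α z)
        + μ (α x) (φ y z) - μ (φ x y) (α z) = 0) :
    ∀ x y z : V,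
      φ (α x) (μ y z) = μ (α y) (φ x z) + μ (α z) (φ x y) := by
  intro x y z
  have h1 := hcocycle x y z
  have h2 := hcocycle y z x
  have h3 := hcocycle z x y
  rw [hskew (μ x y) (α z), hcomm (φ x y) (α z)] at h1
  rw [hcomm z x, hskew (μ y z) (α x), hcomm (φ y z) (α x), hskew z x] at h2
  rw [hcomm z x, hskew (μ x z) (α y), hcomm (φ z x) (α y), hskew z x] at h3
  simp only [map_neg, LinearMap.neg_apply, sub_neg_eq_add] at h1 h2 h3
  have key : (2:K) • (φ (α x) (μ y z) - (μ (α y) (φ x z) + μ (α z) (φ x y))) = 0 := by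
    linear_combination (norm := module) h1 + h2 - h3
  rcases smul_eq_zero.mp key with h | h
  · exact absurd h two_ne_zero
  · exact sub_eq_zero.mp h
end

section
/- Let (μ_t)_{t} with μ_t = Σ_{i≥0} μ_i t^i and α_t = Σ_{i≥0} α_i t^i be a formal deformation of a commutative Hom-associative algebra (V, μ₀, α₀), i.e. for each s ≥ 0, Σ_{k=0}^{s} Σ_{i=0}^{s−k} μ_i ∘_{α_k} μ_{s−k−i} = 0. Define the bracket {x, y} = μ₁(x,y) − μ₁(y,x). Then (V, μ₀, {·,·}, α₀) is a Hom-Poisson algebra: {·,·} is skew-symmetric, satisfies the Hom-Jacobi identity with respect to α₀, and satisfies {α₀(x), μ₀(y,z)} = μ₀(α₀(y), {x,z}) + μ₀(α₀(z), {x,y}). -/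
open Finset

set_option maxHeartbeats 1600000

/-- A formal deformation of a commutative Hom-associative algebra induces, via the
skew-symmetrization of its first-order term, a Hom-Poisson algebra structure. -/
theorem deformation_induces_homPoisson
    {K V : Type*} [Field K] [CharZero K] [AddCommGroup V] [Module K V]
    (μ : ℕ → (V →ₗ[K] V →ₗ[K] V)) (α : ℕ → (V →ₗ[K] V))
    (hcomm : ∀ x y : V, μ 0 x y = μ 0 y x)
    (hdef : ∀ s : ℕ, ∀ x y z : V,
      ∑ k ∈ Finset.range (s + 1), ∑ i ∈ Finset.range (s - k + 1),
        (μ i ((α k) x) (μ (s - k - i) y z) - μ i (μ (s - k - i) x y) ((α k) z)) = 0)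
    (br : V → V → V)
    (hbr : ∀ x y : V, br x y = μ 1 x y - μ 1 y x) :
    (∀ x y : V, br x y = - br y x)
    ∧ (∀ x y z : V,
        br ((α 0) x) (br y z) + br ((α 0) y) (br z x) + br ((α 0) z) (br x y) = 0)
    ∧ (∀ x y z : V,
        br ((α 0) x) (μ 0 y z) = μ 0 ((α 0) y) (br x z) + μ 0 ((α 0) z) (br x y)) := by
  have hd1 : ∀ x y z : V, (μ 0 ((α 0) x) (μ 1 y z) - μ 0 (μ 1 x y) ((α 0) z)) + (μ 1 ((α 0) x) (μ 0 y z) - μ 1 (μ 0 x y) ((α 0) z)) + (μ 0 ((α 1) x) (μ 0 y z) - μ 0 (μ 0 x y) ((α 1) z)) = 0 := by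
    intro x y z
    have h := hdef 1 x y z
    simp only [Finset.sum_range_succ, Finset.sum_range_zero] at h
    norm_num at h
    linear_combination (norm := abel) h
  have hd2 : ∀ x y z : V, (μ 0 ((α 0) x) (μ 2 y z) - μ 0 (μ 2 x y) ((α 0) z)) + (μ 1 ((α 0) x) (μ 1 y z) - μ 1 (μ 1 x y) ((α 0) z)) + (μ 2 ((α 0) x) (μ 0 y z) - μ 2 (μ 0 x y) ((α 0) z)) + (μ 0 ((α 1) x) (μ 1 y z) - μ 0 (μ 1 x y) ((α 1) z)) + (μ 1 ((α 1) x) (μ 0 y z) - μ 1 (μ 0 x y) ((α 1) z)) + (μ 0 ((α 2) x) (μ 0 y z) - μ 0 (μ 0 x y) ((α 2) z)) = 0 := by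
    intro x y z
    have h := hdef 2 x y z
    simp only [Finset.sum_range_succ, Finset.sum_range_zero] at h
    norm_num at h
    linear_combination (norm := abel) h
  refine ⟨fun x y => by rw [hbr, hbr]; abel, fun x y z => ?_, fun x y z => ?_⟩
  · simp only [hbr, map_sub, LinearMap.sub_apply]
    have hj1 : μ 1 ((α 1) x) (μ 0 y z) = μ 1 ((α 1) x) (μ 0 z y) := by rw [hcomm y z]
    have hj2 : μ 1 ((α 1) y) (μ 0 x z) = μ 1 ((α 1) y) (μ 0 z x) := by rw [hcomm x z]
    have hj3 : μ 1 ((α 1) z) (μ 0 x y) = μ 1 ((α 1) z) (μ 0 y x) := by rw [hcomm x y]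
    have hj4 : μ 1 (μ 0 x y) ((α 1) z) = μ 1 (μ 0 y x) ((α 1) z) := by rw [hcomm x y]
    have hj5 : μ 1 (μ 0 x z) ((α 1) y) = μ 1 (μ 0 z x) ((α 1) y) := by rw [hcomm x z]
    have hj6 : μ 1 (μ 0 y z) ((α 1) x) = μ 1 (μ 0 z y) ((α 1) x) := by rw [hcomm y z]
    have hj7 : μ 2 ((α 0) x) (μ 0 y z) = μ 2 ((α 0) x) (μ 0 z y) := by rw [hcomm y z]
    have hj8 : μ 2 ((α 0) y) (μ 0 x z) = μ 2 ((α 0) y) (μ 0 z x) := by rw [hcomm x z]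
    have hj9 : μ 2 ((α 0) z) (μ 0 x y) = μ 2 ((α 0) z) (μ 0 y x) := by rw [hcomm x y]
    have hj10 : μ 2 (μ 0 x y) ((α 0) z) = μ 2 (μ 0 y x) ((α 0) z) := by rw [hcomm x y]
    have hj11 : μ 2 (μ 0 x z) ((α 0) y) = μ 2 (μ 0 z x) ((α 0) y) := by rw [hcomm x z]
    have hj12 : μ 2 (μ 0 y z) ((α 0) x) = μ 2 (μ 0 z y) ((α 0) x) := by rw [hcomm y z]
    linear_combination (norm := abel) hd2 x y z - hd2 x z y - hd2 y x z + hd2 y z x + hd2 z x y - hd2 z y x - hcomm ((α 0) x) (μ 2 y z) + hcomm ((α 0) x) (μ 2 z y) + hcomm ((α 0) y) (μ 2 x z) - hcomm ((α 0) y) (μ 2 z x) - hcomm ((α 0) z) (μ 2 x y) + hcomm ((α 0) z) (μ 2 y x) - hcomm ((α 1) x) (μ 1 y z) + hcomm ((α 1) x) (μ 1 z y) + hcomm ((α 1) y) (μ 1 x z) - hcomm ((α 1) y) (μ 1 z x) - hcomm ((α 1) z) (μ 1 x y) + hcomm ((α 1) z) (μ 1 y x) - hcomm ((α 2) x) (μ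 0 y z) + hcomm ((α 2) x) (μ 0 z y) + hcomm ((α 2) y) (μ 0 x z) - hcomm ((α 2) y) (μ 0 z x) - hcomm ((α 2) z) (μ 0 x y) + hcomm ((α 2) z) (μ 0 y x) - hj1 + hj2 - hj3 + hj4 - hj5 + hj6 - hj7 + hj8 - hj9 + hj10 - hj11 + hj12
  · simp only [hbr, map_sub, LinearMap.sub_apply]
    have hl1 : μ 0 ((α 1) y) (μ 0 x z) = μ 0 ((α 1) y) (μ 0 z x) := by rw [hcomm x z]
    have hl2 : μ 0 ((α 1) z) (μ 0 x y) = μ 0 ((α 1) z) (μ 0 y x) := by rw [hcomm x y]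
    have hl3 : μ 1 ((α 0) y) (μ 0 x z) = μ 1 ((α 0) y) (μ 0 z x) := by rw [hcomm x z]
    have hl4 : μ 1 (μ 0 x y) ((α 0) z) = μ 1 (μ 0 y x) ((α 0) z) := by rw [hcomm x y]
    linear_combination (norm := abel) hd1 x y z - hd1 y x z + hd1 y z x - hcomm ((α 0) x) (μ 1 y z) - hcomm ((α 0) z) (μ 1 x y) + hcomm ((α 0) z) (μ 1 y x) - hcomm ((α 1) x) (μ 0 y z) + hl1 - hcomm ((α 1) z) (μ 0 x y) + hl2 + hcomm ((α 1) z) (μ 0 y x) + hl3 + hl4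
end

section
/- Let V be a 3-dimensional K-vector space with basis (x₁, x₂, x₃) and bracket [x₁,x₂] = 2x₂, [x₁,x₃] = −2x₃, [x₂,x₃] = x₁ (extended skew-symmetrically and bilinearly). A linear map α: V → V makes (V, [·,·], α) a Hom-Lie algebra if and only if the matrix of α with respect to this basis has the form [[a, d, c], [2c, b, f], [2d, e, b]] for some scalars a, b, c, d, e, f ∈ K. -/
/-- The sl₂ bracket on coordinates with respect to the basis `(x₁, x₂, x₃)`:
`[x₁,x₂] = 2x₂`, `[x₁,x₃] = -2x₃`, `[x₂,x₃] = x₁`, extended bilinearly and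
skew-symmetrically. -/
def sl2Bracket {K : Type*} [Field K] (u v : Fin 3 → K) : Fin 3 → K :=
  ![u 1 * v 2 - u 2 * v 1,
    2 * (u 0 * v 1 - u 1 * v 0),
    -2 * (u 0 * v 2 - u 2 * v 0)]

/-- A linear map `α` (given by its matrix `A` in the basis `(x₁,x₂,x₃)`) makes the
sl₂ bracket into a Hom-Lie algebra iff `A` has the form
`[[a, d, c], [2c, b, f], [2d, e, b]]`. -/
theorem sl2_homLie_iff_matrix_form
    {K : Type*} [Field K] [CharZero K] (A : Matrix (Fin 3) (Fin 3) K) :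
    (∀ u v w : Fin 3 → K,
      sl2Bracket (A.mulVec u) (sl2Bracket v w)
        + sl2Bracket (A.mulVec v) (sl2Bracket w u)
        + sl2Bracket (A.mulVec w) (sl2Bracket u v) = 0)
    ↔ ∃ a b c d e f : K,
        A = !![a, d, c; 2 * c, b, f; 2 * d, e, b] := by
  constructor
  · intro h
    have h0 := h ![1,0,0] ![0,1,0] ![0,0,1]
    have e0 := congrFun h0 0
    have e1 := congrFun h0 1
    have e2 := congrFun h0 2
    simp [sl2Bracket, Matrix.mulVec, dotProduct, Fin.sum_univ_three] at e0 e1 e2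
    refine ⟨A 0 0, A 1 1, A 0 2, A 0 1, A 2 1, A 1 2, ?_⟩
    have h22 : A 2 2 = A 1 1 := by linear_combination -(1/2) * e0
    have h10 : A 1 0 = 2 * A 0 2 := by linear_combination -(1/2) * e1
    have h20 : A 2 0 = 2 * A 0 1 := by linear_combination (1/2) * e2
    ext i j
    fin_cases i <;> fin_cases j <;>
      simp [h22, h10, h20]
  · rintro ⟨a, b, c, d, e, f, rfl⟩
    intro u v w
    funext i
    fin_cases i <;>
      simp [sl2Bracket, Matrix.mulVec, dotProduct, Fin.sum_univ_three] <;> ring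
end

section
/- Let V = ⊕_{n∈ℤ} K x_n with bracket [x_n, x_m] = ({n}_q − {m}_q) x_{n+m}, where {n}_q = (qⁿ−1)/(q−1) for q ≠ 1, and the linear map α(x_n) = (qⁿ+1) x_n. Then (V, [·,·], α) is a Hom-Lie algebra: the bracket is skew-symmetric and (qⁿ+1)[x_n,[x_l,x_m]] + (q^l+1)[x_l,[x_m,x_n]] + (q^m+1)[x_m,[x_n,x_l]] = 0 for all n, l, m ∈ ℤ. -/
/-- The q-integer `{n}_q = (qⁿ - 1)/(q - 1)` (for `n ∈ ℤ`). -/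
def qInt {K : Type*} [Field K] (q : K) (n : ℤ) : K := (q ^ n - 1) / (q - 1)

/-- The q-deformed Witt bracket on `⊕_{n∈ℤ} K x_n`, defined on generators by
`[x_n, x_m] = ({n}_q - {m}_q) x_{n+m}` and extended bilinearly. -/
noncomputable def qWittBracket {K : Type*} [Field K] (q : K)
    (u v : ℤ →₀ K) : ℤ →₀ K :=
  u.sum fun n a => v.sum fun m b =>
    (a * b * (qInt q n - qInt q m)) • Finsupp.single (n + m) (1 : K)

/-- The generator `x_n`. -/
noncomputable def qWittGen {K : Type*} [Field K] (n : ℤ) : ℤ →₀ K :=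
  Finsupp.single n (1 : K)

lemma qWittBracket_single {K : Type*} [Field K] (q : K) (n m : ℤ) (a b : K) :
    qWittBracket q (Finsupp.single n a) (Finsupp.single m b)
      = (a * b * (qInt q n - qInt q m)) • Finsupp.single (n + m) (1 : K) := by
  unfold qWittBracket
  rw [Finsupp.sum_single_index, Finsupp.sum_single_index] <;> simp

lemma qWittBracket_anticomm {K : Type*} [Field K] (q : K) (u v : ℤ →₀ K) :
    qWittBracket q u v = - qWittBracket q v u := by
  rw [eq_neg_iff_add_eq_zero]
  unfold qWittBracket
  simp only [Finsupp.sum]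
  rw [Finset.sum_comm (s := v.support) (t := u.support)]
  rw [← Finset.sum_add_distrib]
  refine Finset.sum_eq_zero fun n _ => ?_
  rw [← Finset.sum_add_distrib]
  refine Finset.sum_eq_zero fun m _ => ?_
  rw [add_comm m n]
  rw [← add_smul]
  convert zero_smul K _ using 2
  ring

/-- The q-deformed Witt algebra with `α(x_n) = (qⁿ + 1) x_n` is a Hom-Lie algebra:
the bracket is skew-symmetric and the σ-deformed Jacobi identity
`(qⁿ+1)[x_n,[x_l,x_m]] + (q^l+1)[x_l,[x_m,x_n]] + (q^m+1)[x_m,[x_n,x_l]] = 0` holds. -/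
theorem qWitt_homLie
    {K : Type*} [Field K] [CharZero K] (q : K) (hq0 : q ≠ 0) (hq1 : q ≠ 1) :
    (∀ u v : ℤ →₀ K, qWittBracket q u v = - qWittBracket q v u)
    ∧ (∀ n l m : ℤ,
        (q ^ n + 1) • qWittBracket q (qWittGen n)
            (qWittBracket q (qWittGen l) (qWittGen m))
          + (q ^ l + 1) • qWittBracket q (qWittGen l)
              (qWittBracket q (qWittGen m) (qWittGen n))
          + (q ^ m + 1) • qWittBracket q (qWittGen m)
              (qWittBracket q (qWittGen n) (qWittGen l)) = 0) := by
  refine ⟨qWittBracket_anticomm q, fun n l m => ?_⟩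
  simp only [qWittGen, qWittBracket_single, one_mul, mul_one, Finsupp.smul_single,
    smul_eq_mul, smul_smul]
  rw [show l + (m + n) = n + (l + m) by ring, show m + (n + l) = n + (l + m) by ring,
    ← Finsupp.single_add, ← Finsupp.single_add, Finsupp.single_eq_zero]
  have hq : q - 1 ≠ 0 := sub_ne_zero.mpr hq1
  unfold qInt
  simp only [zpow_add₀ hq0]
  field_simp
  ring
end

section
/- Let A₀ = (V, μ₀, α₀) be a Hom-associative algebra, μ₁ a bilinear map, and α₁ a linear map with μ₀ ∘_{α₁} μ₀ = 0. Then μ_t = μ₀ + tμ₁ and α_t = α₀ + tα₁ satisfy the Hom-associativity condition μ_t(α_t(x), μ_t(y,z)) = μ_t(μ_t(x,y), α_t(z)) modulo t² (i.e. the coefficients of t⁰ and t¹ vanish) if and only if δ²μ₁ = 0, where δ²μ₁(x,y,z) = μ₁(α₀(x), μ₀(y,z)) − μ₁(μ₀(x,y), α₀(z)) + μ₀(α₀(x), μ₁(y,z)) − μ₀(μ₁(x,y), α₀(z)). -/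
/-- An infinitesimal deformation `μ_t = μ₀ + tμ₁`, `α_t = α₀ + tα₁` of a
Hom-associative algebra (with `μ₀ ∘_{α₁} μ₀ = 0`) is Hom-associative modulo `t²`
if and only if `δ²μ₁ = 0`. -/
theorem infinitesimal_deformation_iff_cocycle
    {K V : Type*} [Field K] [CharZero K] [AddCommGroup V] [Module K V]
    (μ₀ μ₁ : V →ₗ[K] V →ₗ[K] V) (α₀ α₁ : V →ₗ[K] V)
    (hassoc : ∀ x y z : V, μ₀ (α₀ x) (μ₀ y z) = μ₀ (μ₀ x y) (α₀ z))
    (hα₁ : ∀ x y z : V, μ₀ (α₁ x) (μ₀ y z) - μ₀ (μ₀ x y) (α₁ z) = 0) :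
    (∀ x y z : V,
      (μ₀ (α₀ x) (μ₀ y z) - μ₀ (μ₀ x y) (α₀ z) = 0)
      ∧ ((μ₁ (α₀ x) (μ₀ y z) - μ₁ (μ₀ x y) (α₀ z))
          + (μ₀ (α₁ x) (μ₀ y z) - μ₀ (μ₀ x y) (α₁ z))
          + (μ₀ (α₀ x) (μ₁ y z) - μ₀ (μ₁ x y) (α₀ z)) = 0))
    ↔ (∀ x y z : V,
        μ₁ (α₀ x) (μ₀ y z) - μ₁ (μ₀ x y) (α₀ z)
          + μ₀ (α₀ x) (μ₁ y z) - μ₀ (μ₁ x y) (α₀ z) = 0) := by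
  constructor
  · intro h x y z
    have h2 := (h x y z).2
    rw [hα₁ x y z] at h2
    abel_nf at h2 ⊢
    exact h2
  · intro h x y z
    refine ⟨by rw [hassoc x y z]; abel, ?_⟩
    have h2 := h x y z
    rw [hα₁ x y z]
    abel_nf at h2 ⊢
    exact h2
end
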